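/- Let A = {a,b,c}, m ≥ 4, and x₁, x₂ ≥ 1 with x₁ + x₂ = m - 3. If (x₁ + 1) is divisible by (x₂ + 1), then x₁ ≥ x₂ and the two-sided infinite word of period 3(x₁+1) obtained by repeating a^{x₁+1} b^{x₂+1} c^{x₁+1} avoids the set {a⋄^{m-2}a, b⋄^{m-2}b, c⋄^{m-2}c, a⋄^{m-2}b, b⋄^{m-2}c, a⋄^{x₁}a⋄^{x₂}c}. -/
import Mathlib


/-- The three-letter alphabet. -/
inductive ABC | a | b | c
deriving DecidableEq
open ABC

/-- A partial word of length `m` over alphabet `A`. -/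
abbrev PW (m : ℕ) (A : Type) := Fin m → Option A

/-- A two-sided infinite word `w` meets a partial word `u`. -/
def Meets {m : ℕ} {A : Type} (w : ℤ → A) (u : PW m A) : Prop :=
  ∃ i : ℤ, ∀ j : Fin m, ∀ x : A, u j = some x → w (i + (j : ℕ)) = x

/-- A set of partial words is unavoidable over `A`. -/
def Unavoidable {m : ℕ} {A : Type} (X : Set (PW m A)) : Prop :=
  ∀ w : ℤ → A, ∃ u ∈ X, Meets w u

/-- A set of partial words is avoidable over `A`. -/
def Avoidable {m : ℕ} {A : Type} (X : Set (PW m A)) : Prop :=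
  ∃ w : ℤ → A, ∀ u ∈ X, ¬ Meets w u

/-- The partial word `x ⋄^(m-2) y` of length `m`: first letter `x`, last letter `y`,
holes in between. -/
def oneHole {A : Type} (m : ℕ) (x y : A) : PW m A :=
  fun j => if (j : ℕ) = 0 then some x else if (j : ℕ) = m - 1 then some y else none

/-- The partial word `x ⋄^(p-1) d ⋄^(m-p-2) y` of length `m`: first letter `x`,
letter `d` at position `p`, last letter `y`, holes elsewhere. -/
def twoDef {A : Type} (m : ℕ) (x d y : A) (p : ℕ) : PW m A :=
  fun j => if (j : ℕ) = 0 then some x else if (j : ℕ) = p then some d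
    else if (j : ℕ) = m - 1 then some y else none

/-- The two-sided infinite word of period `P` repeating the block `f` (given on `[0, P)`). -/
def periodic {A : Type} (P : ℕ) (f : ℕ → A) : ℤ → A :=
  fun i => f ((i % (P : ℤ)).toNat)

/-- If (x₂+1) ∣ (x₁+1), then x₁ ≥ x₂ and the word repeating a^(x₁+1) b^(x₂+1) c^(x₁+1)
avoids {a⋄^(m-2)a, b⋄^(m-2)b, c⋄^(m-2)c, a⋄^(m-2)b, b⋄^(m-2)c, a⋄^(x₁)a⋄^(x₂)c}. -/
theorem stmt_6 (m x₁ x₂ : ℕ) (hm : 4 ≤ m) (hx₁ : 1 ≤ x₁) (hx₂ : 1 ≤ x₂)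
    (hsum : x₁ + x₂ = m - 3) (hdvd : (x₂ + 1) ∣ (x₁ + 1)) :
    x₂ ≤ x₁ ∧
    (∀ u ∈ ({oneHole m a a, oneHole m b b, oneHole m c c, oneHole m a b,
             oneHole m b c, twoDef m a a c (x₁ + 1)} : Set (PW m ABC)),
      ¬ Meets (periodic ((x₁ + 1) + (x₂ + 1) + (x₁ + 1)) (fun n =>
        if n < x₁ + 1 then a
        else if n < x₁ + x₂ + 2 then b
        else c)) u) := by
  have ht : x₂ + 1 ≤ x₁ + 1 := Nat.le_of_dvd (by omega) hdvd
  refine ⟨by omega, ?_⟩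
  set F : ℕ → ABC := (fun n => if n < x₁ + 1 then a else if n < x₁ + x₂ + 2 then b else c) with hF
  set P : ℕ := x₁ + 1 + (x₂ + 1) + (x₁ + 1) with hPdef
  have hP0 : 0 < P := by omega
  have hPZ : (0:ℤ) < (P:ℤ) := by exact_mod_cast hP0
  have key : ∀ (i : ℤ) (k : ℕ), periodic P F (i + (k:ℕ)) = F (((i % (P:ℤ)).toNat + k) % P) := by
    intro i k
    unfold periodic
    congr 1
    have h0le : 0 ≤ i % (P:ℤ) := Int.emod_nonneg i (by omega)
    have hcast : ((i % (P:ℤ)).toNat : ℤ) = i % (P:ℤ) := Int.toNat_of_nonneg h0le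
    have h1 : (i + (k:ℤ)) % (P:ℤ) = (((i % (P:ℤ)).toNat : ℤ) + (k:ℤ)) % P := by
      rw [hcast]
      conv_lhs => rw [← Int.emod_add_mul_ediv i (P:ℤ)]
      rw [add_right_comm]
      exact Int.add_mul_emod_self_left _ _ _
    rw [h1, ← Nat.cast_add, ← Int.natCast_mod, Int.toNat_natCast]
  have modspec : ∀ x : ℕ, x < P + P → (x % P = x ∧ x < P) ∨ (x % P = x - P ∧ P ≤ x) := by
    intro x hx
    rcases Nat.lt_or_ge x P with h | h
    · exact Or.inl ⟨Nat.mod_eq_of_lt h, h⟩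
    · exact Or.inr ⟨by rw [Nat.mod_eq_sub_mod h, Nat.mod_eq_of_lt (by omega)], h⟩
  have hax : ∀ n, F n = a ↔ n < x₁ + 1 := by
    intro n; rw [hF]; dsimp only; split_ifs with h1 h2 <;> simp <;> omega
  have hbx : ∀ n, F n = b ↔ (x₁ + 1 ≤ n ∧ n < x₁ + x₂ + 2) := by
    intro n; rw [hF]; dsimp only; split_ifs with h1 h2 <;> simp <;> omega
  have hcx : ∀ n, F n = c ↔ x₁ + x₂ + 2 ≤ n := by
    intro n; rw [hF]; dsimp only; split_ifs with h1 h2 <;> simp <;> omega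
  intro u hu
  have hrP : ∀ i : ℤ, (i % (P:ℤ)).toNat < P := by
    intro i
    have h1 := Int.emod_lt_of_pos i hPZ
    have h2 : 0 ≤ i % (P:ℤ) := Int.emod_nonneg i (by omega)
    omega
  simp only [Set.mem_insert_iff, Set.mem_singleton_iff] at hu
  rcases hu with rfl | rfl | rfl | rfl | rfl | rfl
  · rintro ⟨i, hmeet⟩
    have h0 : periodic P F (i + ((0:ℕ):ℤ)) = a := hmeet ⟨0, by omega⟩ a (by simp [oneHole])
    have hL : periodic P F (i + ((m-1:ℕ):ℤ)) = a := hmeet ⟨m-1, by omega⟩ a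
      (by simp [oneHole, show m - 1 ≠ 0 by omega])
    rw [key] at h0 hL
    set r := (i % (P:ℤ)).toNat with hrdef
    have hr := hrP i
    rw [Nat.mod_eq_of_lt (by omega)] at h0
    rcases modspec (r + (m-1)) (by omega) with ⟨he, hlt⟩ | ⟨he, hge⟩ <;> rw [he] at hL <;>
      rw [hax] at h0 hL <;> omega
  · rintro ⟨i, hmeet⟩
    have h0 : periodic P F (i + ((0:ℕ):ℤ)) = b := hmeet ⟨0, by omega⟩ b (by simp [oneHole])
    have hL : periodic P F (i + ((m-1:ℕ):ℤ)) = b := hmeet ⟨m-1, by omega⟩ b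
      (by simp [oneHole, show m - 1 ≠ 0 by omega])
    rw [key] at h0 hL
    set r := (i % (P:ℤ)).toNat with hrdef
    have hr := hrP i
    rw [Nat.mod_eq_of_lt (by omega)] at h0
    rcases modspec (r + (m-1)) (by omega) with ⟨he, hlt⟩ | ⟨he, hge⟩ <;> rw [he] at hL <;>
      rw [hbx] at h0 hL <;> omega
  · rintro ⟨i, hmeet⟩
    have h0 : periodic P F (i + ((0:ℕ):ℤ)) = c := hmeet ⟨0, by omega⟩ c (by simp [oneHole])
    have hL : periodic P F (i + ((m-1:ℕ):ℤ)) = c := hmeet ⟨m-1, by omega⟩ c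
      (by simp [oneHole, show m - 1 ≠ 0 by omega])
    rw [key] at h0 hL
    set r := (i % (P:ℤ)).toNat with hrdef
    have hr := hrP i
    rw [Nat.mod_eq_of_lt (by omega)] at h0
    rcases modspec (r + (m-1)) (by omega) with ⟨he, hlt⟩ | ⟨he, hge⟩ <;> rw [he] at hL <;>
      rw [hcx] at h0 hL <;> omega
  · rintro ⟨i, hmeet⟩
    have h0 : periodic P F (i + ((0:ℕ):ℤ)) = a := hmeet ⟨0, by omega⟩ a (by simp [oneHole])
    have hL : periodic P F (i + ((m-1:ℕ):ℤ)) = b := hmeet ⟨m-1, by omega⟩ b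
      (by simp [oneHole, show m - 1 ≠ 0 by omega])
    rw [key] at h0 hL
    set r := (i % (P:ℤ)).toNat with hrdef
    have hr := hrP i
    rw [Nat.mod_eq_of_lt (by omega)] at h0
    rcases modspec (r + (m-1)) (by omega) with ⟨he, hlt⟩ | ⟨he, hge⟩ <;> rw [he] at hL <;>
      rw [hax] at h0 <;> rw [hbx] at hL <;> omega
  · rintro ⟨i, hmeet⟩
    have h0 : periodic P F (i + ((0:ℕ):ℤ)) = b := hmeet ⟨0, by omega⟩ b (by simp [oneHole])
    have hL : periodic P F (i + ((m-1:ℕ):ℤ)) = c := hmeet ⟨m-1, by omega⟩ c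
      (by simp [oneHole, show m - 1 ≠ 0 by omega])
    rw [key] at h0 hL
    set r := (i % (P:ℤ)).toNat with hrdef
    have hr := hrP i
    rw [Nat.mod_eq_of_lt (by omega)] at h0
    rcases modspec (r + (m-1)) (by omega) with ⟨he, hlt⟩ | ⟨he, hge⟩ <;> rw [he] at hL <;>
      rw [hbx] at h0 <;> rw [hcx] at hL <;> omega
  · rintro ⟨i, hmeet⟩
    have h0 : periodic P F (i + ((0:ℕ):ℤ)) = a := hmeet ⟨0, by omega⟩ a (by simp [twoDef])
    have hM : periodic P F (i + ((x₁+1:ℕ):ℤ)) = a := hmeet ⟨x₁+1, by omega⟩ a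
      (by simp [twoDef, show x₁ + 1 ≠ 0 by omega])
    rw [key] at h0 hM
    set r := (i % (P:ℤ)).toNat with hrdef
    have hr := hrP i
    rw [Nat.mod_eq_of_lt (by omega)] at h0
    rw [hax] at h0
    rw [Nat.mod_eq_of_lt (by omega)] at hM
    rw [hax] at hM
    omega
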